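/- For all integers g ≥ 1 and natural numbers m, n: the ℂ-dimension of V₊^{(g,m,n)} equals ⌊(m − |3n−6g+6|)/2⌋ + 1 if m ≥ |3n−6g+6| and equals 0 otherwise; the ℂ-dimension of V₋^{(g,m,n)} equals ⌊(m − 1 − |3n−6g+6|)/2⌋ + 1 if m − 1 ≥ |3n−6g+6| and equals 0 otherwise. -/

import Mathlib

/-!
With `x = z₁`, `y = 1/432 − z₁` every generator of `V±` has the form `x^k₁ y^k₂ v` for one fixed
nonzero `v`, subject to `k₁ + k₂ < M` (with `M = m + 1` for `V₊` and `M = m` for `V₋`) and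
`k₁ − k₂ = d`. For `d = a ≥ 0` these are the elements `(xy)^t x^a v` with `2t + a < M`, and
symmetrically for `d < 0`. Since `xy = z₁(1/432 − z₁)` is a nonconstant polynomial in the
transcendental `z₁`, it is transcendental over `ℂ`, so its powers are linearly independent and
the dimension is the number `(M − |d| + 1) / 2` of admissible `t` (truncated subtraction makes
this `0` when `M ≤ |d|`).
-/

open MvPolynomial

noncomputable section

/-- `K = ℂ(z₁,z₂)`, the field of rational functions in two variables over `ℂ`. -/
abbrev K2 : Type := FractionRing (MvPolynomial (Fin 2) ℂ)

/-- The rational function `z₁`. -/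
def z1 : K2 := algebraMap (MvPolynomial (Fin 2) ℂ) K2 (X 0)

/-- The rational function `z₂`. -/
def z2 : K2 := algebraMap (MvPolynomial (Fin 2) ℂ) K2 (X 1)

/-- The conifold discriminant `Δ₁ = (1−432z₁)³ − 27·(432z₁)³·z₂`. -/
def Δ1 : K2 := (1 - 432 * z1) ^ 3 - 27 * (432 * z1) ^ 3 * z2

/-- The conifold discriminant `Δ₂ = 1 + 27z₂`. -/
def Δ2 : K2 := 1 + 27 * z2

/-- `V₊^{(g,m,n)}`: the ℂ-span of `z₁^{k₁}(1/432−z₁)^{k₂} z₂^n (Δ₁Δ₂)^{−(2g−2)}`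
over all `k₁, k₂ ≥ 0` with `k₁+k₂ ≤ m` and `k₁−k₂ = 3n−6g+6`. -/
def Vplus (g : ℤ) (m n : ℕ) : Submodule ℂ K2 :=
  Submodule.span ℂ
    {f : K2 | ∃ k₁ k₂ : ℕ, k₁ + k₂ ≤ m ∧ (k₁ : ℤ) - k₂ = 3 * n - 6 * g + 6 ∧
      f = z1 ^ k₁ * (1 / 432 - z1) ^ k₂ * z2 ^ n * (Δ1 * Δ2) ^ (-(2 * g - 2))}

/-- `V₋^{(g,m,n)}`: the ℂ-span of `(1/432−2z₁)·z₁^{k₁}(1/432−z₁)^{k₂} z₂^n (Δ₁Δ₂)^{−(2g−2)}`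
over all `k₁, k₂ ≥ 0` with `k₁+k₂ ≤ m−1` and `k₁−k₂ = 3n−6g+6`. -/
def Vminus (g : ℤ) (m n : ℕ) : Submodule ℂ K2 :=
  Submodule.span ℂ
    {f : K2 | ∃ k₁ k₂ : ℕ, k₁ + k₂ + 1 ≤ m ∧ (k₁ : ℤ) - k₂ = 3 * n - 6 * g + 6 ∧
      f = (1 / 432 - 2 * z1) * z1 ^ k₁ * (1 / 432 - z1) ^ k₂ * z2 ^ n *
            (Δ1 * Δ2) ^ (-(2 * g - 2))}


section MonomialsWithDiff

variable {k L : Type*} [Field k] [CommRing L] [Algebra k L]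

def monomialsWithDiff (x y v : L) (d : ℤ) (M : ℕ) : Set L :=
  {f | ∃ k₁ k₂ : ℕ, k₁ + k₂ < M ∧ (k₁ : ℤ) - k₂ = d ∧ f = x ^ k₁ * y ^ k₂ * v}

theorem monomialsWithDiff_swap (x y v : L) (d : ℤ) (M : ℕ) :
    monomialsWithDiff x y v d M = monomialsWithDiff y x v (-d) M := by
  ext f
  constructor <;> rintro ⟨k₁, k₂, hM, hd, rfl⟩ <;>
    exact ⟨k₂, k₁, by omega, by omega, by ring⟩

theorem monomialsWithDiff_natCast (x y v : L) (a M : ℕ) :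
    monomialsWithDiff x y v a M =
      Set.range fun t : Fin ((M - a + 1) / 2) => (x * y) ^ (t : ℕ) * (x ^ a * v) := by
  ext f
  constructor
  · rintro ⟨k₁, t, hM, hd, rfl⟩
    obtain rfl : k₁ = t + a := by omega
    exact ⟨⟨t, by omega⟩, by ring⟩
  · rintro ⟨⟨t, ht⟩, rfl⟩
    exact ⟨t + a, t, by omega, by omega, by ring⟩

theorem Transcendental.mul_algebraMap_sub {x : L} (hx : Transcendental k x) (c : k) :
    Transcendental k (x * (algebraMap k L c - x)) := by
  set p : Polynomial k := Polynomial.C c * Polynomial.X - Polynomial.X ^ 2 with hp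
  have hdeg : p.natDegree = 2 := by
    rw [hp]
    compute_degree!
  have hlc : p.leadingCoeff = -1 := by
    rw [Polynomial.leadingCoeff, hdeg, hp]
    simp [Polynomial.coeff_X_pow]
  convert hx.aeval _ (by rw [hdeg]; norm_num)
    (by rw [hlc]; exact mem_nonZeroDivisors_of_ne_zero (by norm_num)) using 1
  simp only [hp, map_sub, map_mul, Polynomial.aeval_C, Polynomial.aeval_X, map_pow]
  ring

variable [IsDomain L]

theorem Transcendental.linearIndependent_pow_mul {z : L} (hz : Transcendental k z) {w : L}
    (hw : w ≠ 0) : LinearIndependent k fun t : ℕ => z ^ t * w := by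
  have hpow : LinearIndependent k fun t : ℕ => z ^ t := by
    have := (Polynomial.basisMonomials k).linearIndependent.map'
      (Polynomial.aeval z).toLinearMap
      (LinearMap.ker_eq_bot.mpr (transcendental_iff_injective.mp hz))
    simpa [Function.comp_def, Polynomial.aeval_monomial] using this
  exact hpow.map' (LinearMap.mulRight k w)
    (LinearMap.ker_eq_bot.mpr fun _ _ h => mul_right_cancel₀ hw h)

theorem finrank_span_monomialsWithDiff_natCast {x y v : L} (hxy : Transcendental k (x * y))
    (hv : v ≠ 0) (a M : ℕ) :
    Module.finrank k (Submodule.span k (monomialsWithDiff x y v a M)) = (M - a + 1) / 2 := by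
  have hx : x ≠ 0 := fun h => hxy (by simpa [h] using isAlgebraic_zero)
  rw [monomialsWithDiff_natCast, finrank_span_eq_card, Fintype.card_fin]
  exact (hxy.linearIndependent_pow_mul (mul_ne_zero (pow_ne_zero a hx) hv)).comp _
    Fin.val_injective

theorem finrank_span_monomialsWithDiff {x y v : L} (hxy : Transcendental k (x * y))
    (hv : v ≠ 0) (d : ℤ) (M : ℕ) :
    Module.finrank k (Submodule.span k (monomialsWithDiff x y v d M)) =
      (M - d.natAbs + 1) / 2 := by
  obtain ⟨a, rfl | rfl⟩ := d.eq_nat_or_neg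
  · exact finrank_span_monomialsWithDiff_natCast hxy hv a M
  · rw [monomialsWithDiff_swap, neg_neg, Int.natAbs_neg]
    exact finrank_span_monomialsWithDiff_natCast (mul_comm x y ▸ hxy) hv a M

end MonomialsWithDiff

theorem transcendental_z1 : Transcendental ℂ z1 :=
  (transcendental_algebraMap_iff (IsFractionRing.injective _ _)).mpr (transcendental_X ℂ 0)

theorem algebraMap_ne_zero_of_eval_zero_ne_zero {p : MvPolynomial (Fin 2) ℂ}
    (hp : eval 0 p ≠ 0) : algebraMap (MvPolynomial (Fin 2) ℂ) K2 p ≠ 0 :=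
  (map_ne_zero_iff _ (IsFractionRing.injective _ _)).mpr fun h => hp (by simp [h])

theorem z2_ne_zero : z2 ≠ 0 :=
  (map_ne_zero_iff _ (IsFractionRing.injective _ _)).mpr (X_ne_zero 1)

theorem Δ1_ne_zero : Δ1 ≠ 0 := by
  have : Δ1 = algebraMap (MvPolynomial (Fin 2) ℂ) K2
      ((1 - 432 * X 0) ^ 3 - 27 * (432 * X 0) ^ 3 * X 1) := by
    simp [Δ1, z1, z2, map_ofNat]
  exact this ▸ algebraMap_ne_zero_of_eval_zero_ne_zero (by simp)

theorem Δ2_ne_zero : Δ2 ≠ 0 := by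
  have : Δ2 = algebraMap (MvPolynomial (Fin 2) ℂ) K2 (1 + 27 * X 1) := by
    simp [Δ2, z2, map_ofNat]
  exact this ▸ algebraMap_ne_zero_of_eval_zero_ne_zero (by simp)

theorem one_div_432_sub_two_mul_z1_ne_zero : (1 / 432 : K2) - 2 * z1 ≠ 0 := by
  have : (1 / 432 : K2) - 2 * z1 =
      algebraMap (MvPolynomial (Fin 2) ℂ) K2 (C (1 / 432) - 2 * X 0) := by
    rw [map_sub, ← MvPolynomial.algebraMap_eq, ← IsScalarTower.algebraMap_apply]
    simp [z1, map_ofNat]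
  exact this ▸ algebraMap_ne_zero_of_eval_zero_ne_zero (by simp)

theorem transcendental_z1_mul_one_div_432_sub_z1 : Transcendental ℂ (z1 * (1 / 432 - z1)) := by
  simpa [map_ofNat] using transcendental_z1.mul_algebraMap_sub (1 / 432)

theorem Vplus_eq_span (g : ℤ) (m n : ℕ) :
    Vplus g m n = Submodule.span ℂ (monomialsWithDiff z1 (1 / 432 - z1)
      (z2 ^ n * (Δ1 * Δ2) ^ (-(2 * g - 2))) (3 * n - 6 * g + 6) (m + 1)) := by
  simp only [Vplus, monomialsWithDiff, mul_assoc, Nat.lt_succ_iff]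

theorem Vminus_eq_span (g : ℤ) (m n : ℕ) :
    Vminus g m n = Submodule.span ℂ (monomialsWithDiff z1 (1 / 432 - z1)
      ((1 / 432 - 2 * z1) * z2 ^ n * (Δ1 * Δ2) ^ (-(2 * g - 2))) (3 * n - 6 * g + 6) m) := by
  unfold Vminus monomialsWithDiff
  congr 1
  ext f
  constructor <;> rintro ⟨k₁, k₂, hM, hd, rfl⟩ <;> exact ⟨k₁, k₂, hM, hd, by ring⟩

theorem dim_Vplus_Vminus_general (g : ℤ) (m n : ℕ) :
    (Module.finrank ℂ (Vplus g m n) =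
      if (3 * (n : ℤ) - 6 * g + 6).natAbs ≤ m then
        (m - (3 * (n : ℤ) - 6 * g + 6).natAbs) / 2 + 1
      else 0) ∧
    (Module.finrank ℂ (Vminus g m n) =
      if (3 * (n : ℤ) - 6 * g + 6).natAbs + 1 ≤ m then
        (m - 1 - (3 * (n : ℤ) - 6 * g + 6).natAbs) / 2 + 1
      else 0) := by
  have hz2 : z2 ^ n ≠ 0 := pow_ne_zero n z2_ne_zero
  have hΔ : (Δ1 * Δ2) ^ (-(2 * g - 2)) ≠ 0 :=
    zpow_ne_zero _ (mul_ne_zero Δ1_ne_zero Δ2_ne_zero)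
  rw [Vplus_eq_span, Vminus_eq_span,
    finrank_span_monomialsWithDiff transcendental_z1_mul_one_div_432_sub_z1
      (mul_ne_zero hz2 hΔ),
    finrank_span_monomialsWithDiff transcendental_z1_mul_one_div_432_sub_z1
      (mul_ne_zero (mul_ne_zero one_div_432_sub_two_mul_z1_ne_zero hz2) hΔ)]
  constructor <;> split_ifs <;> omega

/-- Dimension formulas: `dim V₊^{(g,m,n)} = ⌊(m − |3n−6g+6|)/2⌋ + 1` if `m ≥ |3n−6g+6|`
(and `0` otherwise), and `dim V₋^{(g,m,n)} = ⌊(m − 1 − |3n−6g+6|)/2⌋ + 1` if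
`m − 1 ≥ |3n−6g+6|` (and `0` otherwise). -/
theorem dim_Vplus_Vminus (g : ℤ) (hg : 1 ≤ g) (m n : ℕ) :
    (Module.finrank ℂ (Vplus g m n) =
      if (3 * (n : ℤ) - 6 * g + 6).natAbs ≤ m then
        (m - (3 * (n : ℤ) - 6 * g + 6).natAbs) / 2 + 1
      else 0) ∧
    (Module.finrank ℂ (Vminus g m n) =
      if (3 * (n : ℤ) - 6 * g + 6).natAbs + 1 ≤ m then
        (m - 1 - (3 * (n : ℤ) - 6 * g + 6).natAbs) / 2 + 1
      else 0) :=
  dim_Vplus_Vminus_general g m n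

end
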